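/- arXiv:2305.01297 — 5 statements merged into one kernel-verified Lean document; each statement's English description precedes it below -/
import Mathlib

section
/- For all y ∈ [0,1), κ > 0 and v ≠ 0, the kernel K(y,v) := e^{-(1-y)/(κ|v|)} / (κ|v|(1 - e^{-1/(κ|v|)})) satisfies K(y,v) ≤ (1/κ) · max(1 + e^{-1}/(1-y), 1/(|v|(1 - e^{-1/(κ|v|)}))). -/
open Real

/-- Upper bound on the transport kernel
`K(y,v) = e^{-(1-y)/(κ|v|)} / (κ|v|(1 - e^{-1/(κ|v|)}))`. -/
theorem kernel_upper_bound (κ y v : ℝ) (hκ : 0 < κ) (hy : y ∈ Set.Ico (0 : ℝ) 1)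
    (hv : v ≠ 0) :
    Real.exp (-(1 - y) / (κ * |v|)) / (κ * |v| * (1 - Real.exp (-1 / (κ * |v|)))) ≤
      (1 / κ) * max (1 + Real.exp (-1) / (1 - y))
        (1 / (|v| * (1 - Real.exp (-1 / (κ * |v|))))) := by
  obtain ⟨hy0, hy1⟩ := hy
  have hav : 0 < |v| := abs_pos.mpr hv
  have hkv : 0 < κ * |v| := mul_pos hκ hav
  have hexp : Real.exp (-1 / (κ * |v|)) < 1 := by
    rw [Real.exp_lt_one_iff]
    exact div_neg_of_neg_of_pos (by norm_num) hkv
  have hden : 0 < κ * |v| * (1 - Real.exp (-1 / (κ * |v|))) :=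
    mul_pos hkv (by linarith)
  have hnum : Real.exp (-(1 - y) / (κ * |v|)) ≤ 1 := by
    rw [Real.exp_le_one_iff]
    exact div_nonpos_of_nonpos_of_nonneg (by linarith) hkv.le
  calc Real.exp (-(1 - y) / (κ * |v|)) / (κ * |v| * (1 - Real.exp (-1 / (κ * |v|))))
      ≤ 1 / (κ * |v| * (1 - Real.exp (-1 / (κ * |v|)))) := by
        gcongr
    _ = (1 / κ) * (1 / (|v| * (1 - Real.exp (-1 / (κ * |v|))))) := by
        rw [one_div, one_div, one_div, ← mul_inv, mul_assoc]
    _ ≤ (1 / κ) * max (1 + Real.exp (-1) / (1 - y))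
        (1 / (|v| * (1 - Real.exp (-1 / (κ * |v|))))) := by
        apply mul_le_mul_of_nonneg_left (le_max_right _ _)
        positivity
end

section
/- Let H be a Hilbert space, C a self-adjoint operator with ⟨Cf, f⟩ ≤ −λ_m ‖(I−Π)f‖² (microscopic coercivity) and T skew-adjoint with ‖TΠf‖ ≥ λ_M ‖Πf‖ (macroscopic coercivity), where Π is the orthogonal projection onto ker C and ΠTΠ = 0. Define A := (I+(TΠ)*TΠ)^{-1}(TΠ)*. Then ⟨ATΠf, f⟩ ≥ (λ_M²/(1+λ_M²)) ‖Πf‖² for all f in the domain. -/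
/-!
Write `B = TΠ`. The vector `g = ATΠf` solves `(I + B†B) g = B†B f`; since `B†` maps into the
range of `Π`, so does `g`, and `w = Πf - g` solves `(I + B†B) w = Πf` with `Πw = w`. Macroscopic
coercivity then gives `⟪w, Πf⟫ = ‖w‖² + ‖Bw‖² ≥ (1 + λ²)‖w‖²`, which together with
`⟪w, Πf⟫ ≤ ‖w‖‖Πf‖` bounds `⟪w, Πf⟫ ≤ ‖Πf‖²/(1 + λ²)`. Finally `⟪g, f⟫ = ‖Πf‖² - ⟪w, Πf⟫`.
-/

open ContinuousLinearMap

section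

variable {E F : Type*} [NormedAddCommGroup E] [InnerProductSpace ℝ E] [CompleteSpace E]
  [NormedAddCommGroup F] [InnerProductSpace ℝ F] [CompleteSpace F]

lemma inner_add_adjoint_apply_self (B : E →L[ℝ] F) (w : E) :
    inner ℝ w (w + adjoint B (B w)) = ‖w‖ ^ 2 + ‖B w‖ ^ 2 := by
  rw [inner_add_right, adjoint_inner_right, real_inner_self_eq_norm_sq,
    real_inner_self_eq_norm_sq]

lemma one_add_sq_mul_inner_le_norm_sq {B : E →L[ℝ] F} {lam : ℝ} {w u : E} (hlam : 0 ≤ lam)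
    (hBw : lam * ‖w‖ ≤ ‖B w‖) (hw : w + adjoint B (B w) = u) :
    (1 + lam ^ 2) * inner ℝ w u ≤ ‖u‖ ^ 2 := by
  have hinner : inner ℝ w u = ‖w‖ ^ 2 + ‖B w‖ ^ 2 := hw ▸ inner_add_adjoint_apply_self B w
  have hBw_sq : lam ^ 2 * ‖w‖ ^ 2 ≤ ‖B w‖ ^ 2 := by
    rw [← mul_pow]; exact pow_le_pow_left₀ (by positivity) hBw 2
  have hlower : (1 + lam ^ 2) * ‖w‖ ^ 2 ≤ inner ℝ w u := by rw [hinner]; linarith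
  have hupper : inner ℝ w u ≤ ‖w‖ * ‖u‖ := real_inner_le_norm w u
  have hw_le : (1 + lam ^ 2) * ‖w‖ ≤ ‖u‖ := by
    rcases (norm_nonneg w).eq_or_lt with hw0 | hw0
    · rw [← hw0, mul_zero]; exact norm_nonneg u
    · exact le_of_mul_le_mul_right (by nlinarith) hw0
  calc (1 + lam ^ 2) * inner ℝ w u ≤ (1 + lam ^ 2) * (‖w‖ * ‖u‖) := by gcongr
    _ = (1 + lam ^ 2) * ‖w‖ * ‖u‖ := by ring
    _ ≤ ‖u‖ * ‖u‖ := by gcongr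
    _ = ‖u‖ ^ 2 := (sq _).symm

lemma comp_adjoint_eq_of_comp_eq {P : E →L[ℝ] E} (hP : IsSelfAdjoint P) {B : E →L[ℝ] F}
    (hBP : B ∘L P = B) : P ∘L adjoint B = adjoint B := by
  conv_rhs => rw [← hBP, adjoint_comp, hP.adjoint_eq]

lemma sq_div_one_add_sq_mul_norm_sq_le_inner {P : E →L[ℝ] E} (hP : IsStarProjection P)
    {B : E →L[ℝ] F} (hBP : B ∘L P = B) {lam : ℝ} (hlam : 0 ≤ lam)
    (hcoer : ∀ x, lam * ‖P x‖ ≤ ‖B x‖) {f g : E} (hg : g + adjoint B (B g) = adjoint B (B f)) :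
    lam ^ 2 / (1 + lam ^ 2) * ‖P f‖ ^ 2 ≤ inner ℝ g f := by
  have hPP (x : E) : P (P x) = P x := congr($(hP.isIdempotentElem) x)
  have hBP_apply (x : E) : B (P x) = B x := congr($hBP x)
  have hPg : P g = g := by
    have : g = adjoint B (B f - B g) := by rw [map_sub, ← hg]; abel
    rw [this, ← comp_adjoint_eq_of_comp_eq hP.isSelfAdjoint hBP, comp_apply, hPP]
  set w := P f - g
  have hPw : P w = w := by rw [map_sub, hPP, hPg]
  have hw : w + adjoint B (B w) = P f := by
    rw [map_sub, map_sub, hBP_apply, ← hg]; simp only [w]; abel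
  have hBw : lam * ‖w‖ ≤ ‖B w‖ := by simpa only [hPw] using hcoer w
  have hbound := one_add_sq_mul_inner_le_norm_sq hlam hBw hw
  have hgf : inner ℝ g f = ‖P f‖ ^ 2 - inner ℝ w (P f) := by
    calc inner ℝ g f = inner ℝ (P g) f := by rw [hPg]
      _ = inner ℝ (P f - w) (P f) := by
        rw [sub_sub_cancel]; exact hP.isSelfAdjoint.isSymmetric g f
      _ = ‖P f‖ ^ 2 - inner ℝ w (P f) := by rw [inner_sub_left, real_inner_self_eq_norm_sq]
  rw [hgf, div_mul_eq_mul_div, div_le_iff₀ (by positivity)]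
  linear_combination hbound

end

theorem dms_spectral_estimate_general {H : Type*} [NormedAddCommGroup H]
    [InnerProductSpace ℝ H] [CompleteSpace H]
    (T P A : H →L[ℝ] H) (lM : ℝ) (hlM : 0 < lM)
    (hPproj : P ∘L P = P)
    (hPsa : ∀ x y : H, (inner ℝ (P x) y : ℝ) = inner ℝ x (P y))
    -- macroscopic coercivity:
    (hmacro : ∀ f : H, lM * ‖P f‖ ≤ ‖T (P f)‖)
    (hA : (ContinuousLinearMap.id ℝ H
        + ContinuousLinearMap.adjoint (T ∘L P) ∘L (T ∘L P)) ∘L A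
      = ContinuousLinearMap.adjoint (T ∘L P)) :
    ∀ f : H, (lM ^ 2 / (1 + lM ^ 2)) * ‖P f‖ ^ 2 ≤ (inner ℝ (A (T (P f))) f : ℝ) := by
  intro f
  have hP : IsStarProjection P := ⟨hPproj, isSelfAdjoint_iff_isSymmetric.2 hPsa⟩
  refine sq_div_one_add_sq_mul_norm_sq_le_inner hP (B := T ∘L P) (by rw [comp_assoc, hPproj])
    hlM.le hmacro ?_
  simpa using congr($hA ((T ∘L P) f))

/-- The key DMS spectral estimate: with microscopic coercivity of the self-adjoint part
`C`, macroscopic coercivity of the skew-adjoint part `T` on the kernel of `C`, `ΠTΠ = 0`,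
and `A = (I + (TΠ)*(TΠ))⁻¹(TΠ)*`, one has
`⟨ATΠf, f⟩ ≥ (λ_M²/(1+λ_M²))‖Πf‖²`. -/
theorem dms_spectral_estimate {H : Type*} [NormedAddCommGroup H]
    [InnerProductSpace ℝ H] [CompleteSpace H]
    (C T P A : H →L[ℝ] H) (lm lM : ℝ) (hlm : 0 < lm) (hlM : 0 < lM)
    (hPproj : P ∘L P = P)
    (hPsa : ∀ x y : H, (inner ℝ (P x) y : ℝ) = inner ℝ x (P y))
    (hCsa : ∀ x y : H, (inner ℝ (C x) y : ℝ) = inner ℝ x (C y))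
    (hTskew : ∀ x y : H, (inner ℝ (T x) y : ℝ) = -(inner ℝ x (T y) : ℝ))
    -- `P` is the orthogonal projection onto `ker C`:
    (hker : ∀ x : H, C x = 0 ↔ P x = x)
    -- microscopic coercivity:
    (hmicro : ∀ f : H, (inner ℝ (C f) f : ℝ) ≤ -lm * ‖f - P f‖ ^ 2)
    -- macroscopic coercivity:
    (hmacro : ∀ f : H, lM * ‖P f‖ ≤ ‖T (P f)‖)
    (hPTP : P ∘L T ∘L P = 0)
    (hA : (ContinuousLinearMap.id ℝ H
        + ContinuousLinearMap.adjoint (T ∘L P) ∘L (T ∘L P)) ∘L A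
      = ContinuousLinearMap.adjoint (T ∘L P)) :
    ∀ f : H, (lM ^ 2 / (1 + lM ^ 2)) * ‖P f‖ ^ 2 ≤ (inner ℝ (A (T (P f))) f : ℝ) :=
  dms_spectral_estimate_general T P A lM hlM hPproj hPsa hmacro hA
end

section
/- Let 0 < t ≤ T and define M_t(v) = (2πt)^{-1/2} e^{-v²/(2t)}. If |T − t| ≤ ε with ε < t/2, then ∫_ℝ (1+v²) (M_T(v) − M_t(v))² M_T(v)^{-1} dv ≤ C(t) ε² for a constant C(t) depending only on t. -/
/-!
The temperature derivative of the Maxwellian is `∂ₛ M_s(v) = M_s(v) (v²/(2s²) − 1/(2s))`. For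
`t ≤ s ≤ b` it is bounded by `c(t) (1 + v²) exp(-v²/(2b))`, where `c(t) = 1/(2t²) + 1/(2t)`, so by
the mean value theorem `|M_T − M_t| ≤ (T − t) c(t) (1 + v²) exp(-v²/(2b))` whenever `t ≤ T ≤ b`.
Dividing the square by `M_T(v) ≥ exp(-v²/(2t)) / √(2πb)` leaves the Gaussian
`exp(-(1/b − 1/(2t)) v²)` times a polynomial, which is integrable as soon as `b < 2t`; since
`T < 3t/2` we may take `b = 3t/2`.
-/

open MeasureTheory Real

/-- The Maxwellian `M_t(v) = (2πt)^{-1/2} exp(-v²/(2t))`. -/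
noncomputable def maxwellian (t v : ℝ) : ℝ :=
  Real.exp (-v ^ 2 / (2 * t)) / Real.sqrt (2 * Real.pi * t)

lemma maxwellian_pos {t : ℝ} (ht : 0 < t) (v : ℝ) : 0 < maxwellian t v := by
  unfold maxwellian
  positivity

lemma hasDerivAt_maxwellian_temperature {s : ℝ} (hs : 0 < s) (v : ℝ) :
    HasDerivAt (maxwellian · v) (maxwellian s v * (v ^ 2 / (2 * s ^ 2) - 1 / (2 * s))) s := by
  have hexponent := (hasDerivAt_const s (-v ^ 2)).div ((hasDerivAt_id' s).const_mul 2)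
    (by positivity)
  have hsqrt := ((hasDerivAt_id' s).const_mul (2 * π)).sqrt (by positivity)
  refine (hexponent.exp.div hsqrt (by positivity)).congr_deriv ?_
  simp only [maxwellian, Pi.div_apply]
  field_simp
  rw [sq_sqrt (by positivity)]
  ring

lemma maxwellian_le_of_mem_Icc {a s b : ℝ} (ha : 0 < a) (has : a ≤ s) (hsb : s ≤ b) (v : ℝ) :
    maxwellian s v ≤ exp (-v ^ 2 / (2 * b)) / √(2 * π * a) := by
  have hs : 0 < s := ha.trans_le has
  unfold maxwellian
  gcongr exp ?_ / √(2 * π * ?_)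
  rw [neg_div, neg_div, neg_le_neg_iff]
  gcongr

lemma inv_maxwellian_le_of_mem_Icc {a s b : ℝ} (ha : 0 < a) (has : a ≤ s) (hsb : s ≤ b) (v : ℝ) :
    (maxwellian s v)⁻¹ ≤ √(2 * π * b) * exp (v ^ 2 / (2 * a)) := by
  rw [maxwellian, inv_div, neg_div, exp_neg, div_inv_eq_mul]
  gcongr

lemma abs_deriv_log_maxwellian_le {t s : ℝ} (ht : 0 < t) (hts : t ≤ s) (v : ℝ) :
    |v ^ 2 / (2 * s ^ 2) - 1 / (2 * s)| ≤ (1 / (2 * t ^ 2) + 1 / (2 * t)) * (1 + v ^ 2) := by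
  have hs : 0 < s := ht.trans_le hts
  have h₁ : 0 ≤ 1 / (2 * t ^ 2) := by positivity
  have h₂ : 0 ≤ 1 / (2 * t) := by positivity
  refine abs_sub_le_of_nonneg_of_le (by positivity) ?_ (by positivity) ?_
  · calc v ^ 2 / (2 * s ^ 2) ≤ 1 / (2 * t ^ 2) * v ^ 2 := by
          rw [one_div_mul_eq_div]; gcongr
      _ ≤ _ := by nlinarith [sq_nonneg v]
  · calc 1 / (2 * s) ≤ 1 / (2 * t) := by gcongr
      _ ≤ _ := by nlinarith [sq_nonneg v]

lemma abs_maxwellian_sub_le {t T b : ℝ} (ht : 0 < t) (htT : t ≤ T) (hTb : T ≤ b) (v : ℝ) :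
    |maxwellian T v - maxwellian t v| ≤
      (1 / (2 * t ^ 2) + 1 / (2 * t)) * (1 + v ^ 2) * (exp (-v ^ 2 / (2 * b)) / √(2 * π * t)) *
        (T - t) := by
  have hderiv : ∀ s ∈ Set.Icc t T,
      ‖maxwellian s v * (v ^ 2 / (2 * s ^ 2) - 1 / (2 * s))‖ ≤
        (1 / (2 * t ^ 2) + 1 / (2 * t)) * (1 + v ^ 2) *
          (exp (-v ^ 2 / (2 * b)) / √(2 * π * t)) := by
    rintro s ⟨hts, hsT⟩
    rw [norm_mul, norm_of_nonneg (maxwellian_pos (ht.trans_le hts) v).le, mul_comm]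
    exact mul_le_mul (abs_deriv_log_maxwellian_le ht hts v)
      (maxwellian_le_of_mem_Icc ht hts (hsT.trans hTb) v)
      (maxwellian_pos (ht.trans_le hts) v).le (by positivity)
  simpa [norm_of_nonneg (sub_nonneg.2 htT)] using
    (convex_Icc t T).norm_image_sub_le_of_norm_hasDerivWithin_le
      (fun s hs => (hasDerivAt_maxwellian_temperature (ht.trans_le hs.1) v).hasDerivWithinAt)
      hderiv (Set.left_mem_Icc.2 htT) (Set.right_mem_Icc.2 htT)

lemma weighted_sq_maxwellian_sub_le {t T b : ℝ} (ht : 0 < t) (htT : t ≤ T) (hTb : T ≤ b) (v : ℝ) :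
    (1 + v ^ 2) * (maxwellian T v - maxwellian t v) ^ 2 / maxwellian T v ≤
      (T - t) ^ 2 * ((1 / (2 * t ^ 2) + 1 / (2 * t)) ^ 2 * √(2 * π * b) / (2 * π * t) *
        ((1 + v ^ 2) ^ 3 * exp (-(1 / b - 1 / (2 * t)) * v ^ 2))) := by
  have hb : 0 < b := ht.trans_le (htT.trans hTb)
  have hexp : exp (-v ^ 2 / (2 * b)) ^ 2 * exp (v ^ 2 / (2 * t)) =
      exp (-(1 / b - 1 / (2 * t)) * v ^ 2) := by
    rw [sq, ← exp_add, ← exp_add]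
    congr 1
    field_simp
    ring
  calc (1 + v ^ 2) * (maxwellian T v - maxwellian t v) ^ 2 / maxwellian T v
      = (1 + v ^ 2) * |maxwellian T v - maxwellian t v| ^ 2 * (maxwellian T v)⁻¹ := by
        rw [sq_abs, div_eq_mul_inv]
    _ ≤ (1 + v ^ 2) * ((1 / (2 * t ^ 2) + 1 / (2 * t)) * (1 + v ^ 2) *
          (exp (-v ^ 2 / (2 * b)) / √(2 * π * t)) * (T - t)) ^ 2 *
          (√(2 * π * b) * exp (v ^ 2 / (2 * t))) := by
        have := maxwellian_pos (ht.trans_le htT) v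
        gcongr ?_ * ?_ ^ 2 * ?_
        · exact abs_maxwellian_sub_le ht htT hTb v
        · exact inv_maxwellian_le_of_mem_Icc ht htT hTb v
    _ = _ := by
        rw [← hexp]
        field_simp
        rw [sq_sqrt (by positivity)]

lemma integrable_one_add_sq_pow_mul_exp_neg_mul_sq {b : ℝ} (hb : 0 < b) (n : ℕ) :
    Integrable fun v : ℝ => (1 + v ^ 2) ^ n * exp (-b * v ^ 2) := by
  have hterm (k : ℕ) : Integrable fun v : ℝ => v ^ k * exp (-b * v ^ 2) := by
    simpa only [rpow_natCast] using
      integrable_rpow_mul_exp_neg_mul_sq hb (s := k) (by linarith [k.cast_nonneg (α := ℝ)])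
  simp_rw [add_comm (1 : ℝ), add_pow, one_pow, mul_one, Finset.sum_mul]
  exact integrable_finsetSum _ fun k _ =>
    ((hterm (2 * k)).const_mul (n.choose k)).congr (ae_of_all _ fun v => by ring)

lemma integral_one_add_sq_pow_mul_exp_neg_mul_sq_pos {b : ℝ} (hb : 0 < b) (n : ℕ) :
    0 < ∫ v : ℝ, (1 + v ^ 2) ^ n * exp (-b * v ^ 2) := by
  rw [integral_pos_iff_support_of_nonneg (fun v => by positivity)
    (integrable_one_add_sq_pow_mul_exp_neg_mul_sq hb n)]
  rw [Function.support_eq_univ fun v => by positivity]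
  simp

/-- Maxwellians at nearby temperatures are close in the weighted `L²` norm with weight
`M_T⁻¹`: if `0 < t ≤ T` and `|T − t| ≤ ε < t/2` then
`∫ (1+v²)(M_T − M_t)² M_T⁻¹ dv ≤ C(t) ε²`. -/
theorem maxwellian_temperature_stability (t : ℝ) (ht : 0 < t) :
    ∃ C : ℝ, 0 < C ∧ ∀ T ε : ℝ, t ≤ T → |T - t| ≤ ε → ε < t / 2 →
      (∫ v : ℝ, (1 + v ^ 2) * (maxwellian T v - maxwellian t v) ^ 2 / maxwellian T v) ≤
        C * ε ^ 2 := by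
  set b := 3 * t / 2 with hb
  set K := (1 / (2 * t ^ 2) + 1 / (2 * t)) ^ 2 * √(2 * π * b) / (2 * π * t)
  set g : ℝ → ℝ := fun v => (1 + v ^ 2) ^ 3 * exp (-(1 / b - 1 / (2 * t)) * v ^ 2)
  have hrate : 0 < 1 / b - 1 / (2 * t) :=
    sub_pos.2 (one_div_lt_one_div_of_lt (by positivity) (by linarith))
  refine ⟨K * ∫ v, g v, mul_pos (by positivity)
    (integral_one_add_sq_pow_mul_exp_neg_mul_sq_pos hrate 3), fun T ε htT hTε hε => ?_⟩
  rw [abs_of_nonneg (sub_nonneg.2 htT)] at hTε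
  calc (∫ v, (1 + v ^ 2) * (maxwellian T v - maxwellian t v) ^ 2 / maxwellian T v)
      ≤ ∫ v, (T - t) ^ 2 * (K * g v) :=
        integral_mono_of_nonneg
          (ae_of_all _ fun v => by have := maxwellian_pos (ht.trans_le htT) v; positivity)
          (((integrable_one_add_sq_pow_mul_exp_neg_mul_sq hrate 3).const_mul K).const_mul _)
          (ae_of_all _ (weighted_sq_maxwellian_sub_le ht htT (by linarith)))
    _ = (T - t) ^ 2 * (K * ∫ v, g v) := by rw [integral_const_mul, integral_const_mul]
    _ ≤ ε ^ 2 * (K * ∫ v, g v) := by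
        have := integral_one_add_sq_pow_mul_exp_neg_mul_sq_pos hrate 3
        gcongr
    _ = (K * ∫ v, g v) * ε ^ 2 := mul_comm _ _
end

section
/- Let S_t denote the free transport semigroup on 𝕋 × ℝ (the 1-torus of length 1), (S_t f)(x,v) = f(x − tv, v), and for c > 0 let P_c f(x,v) := c·1_{|v|≤1} ∫_ℝ f(x,u) du. Then for any (x₀,v₀) ∈ 𝕋 × ℝ and any 0 < r < s with s − r ≥ 1, one has P_c S_{s−r} P_c S_r δ_{(x₀,v₀)} ≥ (c²/(s−r)) · 1_{|v| ≤ 1} as measures, i.e. the double collision-transport composition of a Dirac mass dominates a multiple of the uniform-in-x indicator on |v| ≤ 1. -/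
open MeasureTheory

instance : Fact ((0 : ℝ) < 1) := ⟨one_pos⟩

/-- Free transport acting on measures on `𝕋 × ℝ` (torus of length 1):
the pushforward by `(x,v) ↦ (x + tv, v)`, corresponding to `(S_t f)(x,v) = f(x - tv, v)`. -/
noncomputable def freeTransport (t : ℝ) (μ : Measure (AddCircle (1 : ℝ) × ℝ)) :
    Measure (AddCircle (1 : ℝ) × ℝ) :=
  μ.map (fun q => (q.1 + (((t * q.2 : ℝ) : ℝ) : AddCircle (1 : ℝ)), q.2))

/-- The operator `P_c`: `(P_c f)(x,v) = c·1_{|v|≤1} ∫ f(x,u) du`, acting on measures as the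
product of the spatial marginal with the measure `c·1_{|v|≤1} dv`. -/
noncomputable def collisionOp (c : ℝ) (μ : Measure (AddCircle (1 : ℝ) × ℝ)) :
    Measure (AddCircle (1 : ℝ) × ℝ) :=
  (μ.map Prod.fst).prod ((ENNReal.ofReal c) • volume.restrict {v : ℝ | |v| ≤ 1})

/-!
After the first transport and collision, the Dirac mass has become `δ_{x₁} ⊗ c·1_{|v|≤1} dv`
with `x₁ = x₀ + r v₀`.
The second transport spreads it along `v ↦ x₁ + (s - r) v`; as `s - r ≥ 1`, the velocity window
`(-1, -1 + 1/(s - r)] ⊆ [-1, 1]` wraps exactly once around the torus, with density `1/(s - r)`,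
so the spatial marginal is at least `c/(s - r)` times Haar measure. The last collision multiplies
by `c·1_{|v|≤1} dv`.
-/

open Set

theorem Real.map_volume_restrict_Ioc_affine {t : ℝ} (ht : 0 < t) (y a b : ℝ) :
    (volume.restrict (Ioc a b)).map (fun v => y + t * v) =
      ENNReal.ofReal t⁻¹ • volume.restrict (Ioc (y + t * a) (y + t * b)) := by
  have hemb : MeasurableEmbedding (fun v : ℝ => y + t * v) :=
    ((Homeomorph.mulLeft₀ t ht.ne').trans (Homeomorph.addLeft y)).measurableEmbedding
  have hpre : (fun v : ℝ => y + t * v) ⁻¹' Ioc (y + t * a) (y + t * b) = Ioc a b := by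
    ext v; simp [mul_le_mul_iff_right₀ ht, mul_lt_mul_iff_right₀ ht]
  have hmap : (volume : Measure ℝ).map (fun v => y + t * v) = ENNReal.ofReal t⁻¹ • volume := by
    rw [show (fun v => y + t * v) = (y + ·) ∘ (t * ·) from rfl,
      ← Measure.map_map (measurable_const_add y) (measurable_const_mul t),
      Real.map_volume_mul_left ht.ne', Measure.map_smul, map_add_left_eq_self,
      abs_of_pos (inv_pos.2 ht)]
  rw [← hpre, ← hemb.restrict_map, hmap, Measure.restrict_smul]

theorem AddCircle.map_volume_restrict_Ioc_affine {T : ℝ} [Fact (0 < T)] (x : AddCircle T)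
    {t : ℝ} (ht : 0 < t) (a : ℝ) :
    (volume.restrict (Ioc a (a + T / t))).map (fun v : ℝ => x + ((t * v : ℝ) : AddCircle T)) =
      ENNReal.ofReal t⁻¹ • volume := by
  obtain ⟨y, rfl⟩ := QuotientAddGroup.mk_surjective x
  have hcomp : (fun v : ℝ => (y : AddCircle T) + ((t * v : ℝ) : AddCircle T)) =
      ((↑) : ℝ → AddCircle T) ∘ fun v => y + t * v := by
    ext v; simp
  rw [hcomp, ← Measure.map_map AddCircle.measurable_mk' (by fun_prop),
    Real.map_volume_restrict_Ioc_affine ht, Measure.map_smul, mul_add, mul_div_cancel₀ _ ht.ne',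
    ← add_assoc, (AddCircle.measurePreserving_mk T _).map_eq]

theorem AddCircle.smul_volume_le_map_volume_restrict_abs_le_one (x : AddCircle (1 : ℝ)) {t : ℝ}
    (ht : 1 ≤ t) :
    ENNReal.ofReal t⁻¹ • volume ≤
      (volume.restrict {v : ℝ | |v| ≤ 1}).map
        (fun v : ℝ => x + ((t * v : ℝ) : AddCircle (1 : ℝ))) := by
  have ht0 : 0 < t := one_pos.trans_le ht
  have hsub : Ioc (-1) (-1 + 1 / t) ⊆ {v : ℝ | |v| ≤ 1} := fun v hv => by
    have : 1 / t ≤ 1 := (div_le_one ht0).2 ht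
    exact abs_le.2 ⟨hv.1.le, by linarith [hv.2]⟩
  rw [← AddCircle.map_volume_restrict_Ioc_affine x ht0 (-1)]
  exact Measure.map_mono (Measure.restrict_mono hsub le_rfl) (by fun_prop)

theorem measurable_freeTransportMap (t : ℝ) :
    Measurable fun q : AddCircle (1 : ℝ) × ℝ => (q.1 + ((t * q.2 : ℝ) : AddCircle (1 : ℝ)), q.2) :=
  (measurable_fst.add (AddCircle.measurable_mk'.comp (measurable_const.mul measurable_snd))).prodMk
    measurable_snd

theorem freeTransport_dirac (t : ℝ) (x : AddCircle (1 : ℝ)) (v : ℝ) :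
    freeTransport t (Measure.dirac (x, v)) =
      Measure.dirac (x + ((t * v : ℝ) : AddCircle (1 : ℝ)), v) :=
  Measure.map_dirac' (measurable_freeTransportMap t) _

theorem collisionOp_dirac (c : ℝ) (x : AddCircle (1 : ℝ)) (v : ℝ) :
    collisionOp c (Measure.dirac (x, v)) =
      (Measure.dirac x).prod (ENNReal.ofReal c • volume.restrict {v : ℝ | |v| ≤ 1}) := by
  rw [collisionOp, Measure.map_dirac' measurable_fst]

theorem map_fst_freeTransport_dirac_prod (t : ℝ) (x : AddCircle (1 : ℝ)) (ν : Measure ℝ)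
    [SFinite ν] :
    (freeTransport t ((Measure.dirac x).prod ν)).map Prod.fst =
      ν.map (fun v : ℝ => x + ((t * v : ℝ) : AddCircle (1 : ℝ))) := by
  rw [freeTransport, Measure.map_map measurable_fst (measurable_freeTransportMap t),
    Measure.dirac_prod, Measure.map_map (by fun_prop) measurable_prodMk_left]
  rfl

theorem doeblin_lower_bound_general (c r s : ℝ) (hc : 0 < c)
    (h1 : 1 ≤ s - r) (x₀ : AddCircle (1 : ℝ)) (v₀ : ℝ) :
    (ENNReal.ofReal (c ^ 2 / (s - r))) •
        ((volume : Measure (AddCircle (1 : ℝ))).prod (volume.restrict {v : ℝ | |v| ≤ 1})) ≤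
      collisionOp c (freeTransport (s - r) (collisionOp c (freeTransport r
        (Measure.dirac (x₀, v₀))))) := by
  set volB : Measure ℝ := volume.restrict {v : ℝ | |v| ≤ 1}
  have hcoef : ENNReal.ofReal (c ^ 2 / (s - r)) =
      ENNReal.ofReal c * (ENNReal.ofReal c * ENNReal.ofReal (s - r)⁻¹) := by
    rw [← ENNReal.ofReal_mul hc.le, ← ENNReal.ofReal_mul hc.le]
    ring_nf
  rw [freeTransport_dirac, collisionOp_dirac, collisionOp, map_fst_freeTransport_dirac_prod,
    Measure.map_smul]
  calc ENNReal.ofReal (c ^ 2 / (s - r)) • (volume.prod volB)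
      = (ENNReal.ofReal c • ENNReal.ofReal (s - r)⁻¹ • volume).prod (ENNReal.ofReal c • volB) := by
        rw [Measure.prod_smul_left, Measure.prod_smul_right, Measure.prod_smul_left, hcoef,
          smul_smul, smul_smul, mul_assoc]
    _ ≤ _ := by
        gcongr
        exact AddCircle.smul_volume_le_map_volume_restrict_abs_le_one _ h1

/-- Doeblin lower bound: for `s - r ≥ 1` the composition `P_c S_{s-r} P_c S_r` applied to
a Dirac mass dominates `(c²/(s−r))·1_{|v|≤1}` (uniform in `x` on the torus). -/
theorem doeblin_lower_bound (c r s : ℝ) (hc : 0 < c) (hr : 0 < r) (hrs : r < s)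
    (h1 : 1 ≤ s - r) (x₀ : AddCircle (1 : ℝ)) (v₀ : ℝ) :
    (ENNReal.ofReal (c ^ 2 / (s - r))) •
        ((volume : Measure (AddCircle (1 : ℝ))).prod (volume.restrict {v : ℝ | |v| ≤ 1})) ≤
      collisionOp c (freeTransport (s - r) (collisionOp c (freeTransport r
        (Measure.dirac (x₀, v₀))))) :=
  doeblin_lower_bound_general c r s hc h1 x₀ v₀
end

section
/- Let g : 𝕋 × ℝ → ℝ be a bounded continuous solution of the stationary equation v ∂_x g(x,v) = (1/κ)(F(x,v) − g(x,v)) for v > 0, where F is continuous and 𝕋 has length 1. Then for v > 0, g admits the representation g(x,v) = ∫_0^1 e^{-(1-y)/(κ v)} / (κ v (1 − e^{-1/(κ v)})) · F(x + y, v) dy. -/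
open MeasureTheory Real

/-! Along a characteristic, `y ↦ e^{c y} g(x + y)` with `c = 1/(κ v)` has derivative
`c e^{c y} F(x + y)`. Integrating over one period and using `g(x + 1) = g(x)` gives
`(e^c - 1) g(x) = ∫₀¹ c e^{c y} F(x + y) dy`, which is the representation after dividing by
`e^c - 1 > 0`. -/

theorem hasDerivAt_exp_mul_mul_of_hasDerivAt {u f : ℝ → ℝ} {c y : ℝ}
    (hu : HasDerivAt u (c * (f y - u y)) y) :
    HasDerivAt (fun y => exp (c * y) * u y) (c * exp (c * y) * f y) y := by
  have hexp : HasDerivAt (fun y => exp (c * y)) (exp (c * y) * c) y :=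
    ((hasDerivAt_id y).const_mul c).exp.congr_deriv (by simp)
  exact (hexp.mul hu).congr_deriv (by ring)

theorem exp_mul_sub_exp_mul_eq_integral {u f : ℝ → ℝ} {c : ℝ}
    (hu : ∀ y, HasDerivAt u (c * (f y - u y)) y) (hf : Continuous f) (a b : ℝ) :
    exp (c * b) * u b - exp (c * a) * u a = ∫ y in a..b, c * exp (c * y) * f y := by
  refine (intervalIntegral.integral_eq_sub_of_hasDerivAt
    (fun y _ => hasDerivAt_exp_mul_mul_of_hasDerivAt (hu y)) ?_).symm
  exact (by fun_prop : Continuous fun y => c * exp (c * y) * f y).intervalIntegrable a b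

theorem eq_integral_of_hasDerivAt_of_add_eq {u f : ℝ → ℝ} {c T x : ℝ} (hcT : c * T ≠ 0)
    (hu : ∀ y, HasDerivAt u (c * (f y - u y)) y) (hf : Continuous f) (hper : u (x + T) = u x) :
    u x = ∫ y in (0 : ℝ)..T, c * exp (-(c * (T - y))) / (1 - exp (-(c * T))) * f (x + y) := by
  have hshift : ∀ y, HasDerivAt (fun y => u (x + y)) (c * (f (x + y) - u (x + y))) y :=
    fun y => (hu (x + y)).comp_const_add x y
  have hint := exp_mul_sub_exp_mul_eq_integral hshift (hf.comp (continuous_const_add x)) 0 T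
  simp only [mul_zero, exp_zero, one_mul, add_zero, hper] at hint
  have hexp : exp (c * T) ≠ 1 := fun h => hcT (exp_eq_one_iff _ |>.mp h)
  have hkernel : ∀ y, c * exp (-(c * (T - y))) / (1 - exp (-(c * T))) * f (x + y)
      = (exp (c * T) - 1)⁻¹ * (c * exp (c * y) * f (x + y)) := by
    intro y
    rw [show -(c * (T - y)) = c * y + -(c * T) by ring, exp_add, exp_neg]
    field_simp
  rw [intervalIntegral.integral_congr (fun y _ => hkernel y), intervalIntegral.integral_const_mul,
    ← hint]
  field_simp [sub_ne_zero.mpr hexp]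

theorem periodic_duhamel_representation_general (κ : ℝ) (hκ : 0 < κ) (g F : ℝ → ℝ → ℝ)
    (hgper : ∀ x v, g (x + 1) v = g x v)
    (hFcont : Continuous fun p : ℝ × ℝ => F p.1 p.2)
    -- the stationary equation for `v > 0`, i.e. `∂ₓ g = (1/(κv))(F − g)`:
    (heq : ∀ v : ℝ, 0 < v → ∀ x : ℝ,
      HasDerivAt (fun x => g x v) ((1 / (κ * v)) * (F x v - g x v)) x) :
    ∀ v : ℝ, 0 < v → ∀ x : ℝ,
      g x v = ∫ y in (0 : ℝ)..1,
        Real.exp (-(1 - y) / (κ * v)) / (κ * v * (1 - Real.exp (-1 / (κ * v)))) *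
          F (x + y) v := by
  intro v hv x
  have hκv : 0 < κ * v := mul_pos hκ hv
  rw [eq_integral_of_hasDerivAt_of_add_eq (by positivity) (heq v hv)
    (hFcont.comp (continuous_id.prodMk continuous_const)) (hgper x v)]
  refine intervalIntegral.integral_congr fun y _ => ?_
  congr 1
  rw [mul_one, one_div_mul_eq_div, div_div, neg_div, neg_div, one_div, inv_mul_eq_div]

/-- Periodic Duhamel representation formula: a bounded continuous 1-periodic (in `x`)
solution of `v ∂ₓ g = (1/κ)(F − g)` for `v > 0` satisfies
`g(x,v) = ∫_0^1 e^{-(1-y)/(κv)}/(κv(1 − e^{-1/(κv)})) F(x+y,v) dy`. -/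
theorem periodic_duhamel_representation (κ : ℝ) (hκ : 0 < κ) (g F : ℝ → ℝ → ℝ)
    (hgper : ∀ x v, g (x + 1) v = g x v)
    (hFper : ∀ x v, F (x + 1) v = F x v)
    (hgcont : Continuous fun p : ℝ × ℝ => g p.1 p.2)
    (hFcont : Continuous fun p : ℝ × ℝ => F p.1 p.2)
    (hgbdd : ∃ M : ℝ, ∀ x v, |g x v| ≤ M)
    -- the stationary equation for `v > 0`, i.e. `∂ₓ g = (1/(κv))(F − g)`:
    (heq : ∀ v : ℝ, 0 < v → ∀ x : ℝ,
      HasDerivAt (fun x => g x v) ((1 / (κ * v)) * (F x v - g x v)) x) :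
    ∀ v : ℝ, 0 < v → ∀ x : ℝ,
      g x v = ∫ y in (0 : ℝ)..1,
        Real.exp (-(1 - y) / (κ * v)) / (κ * v * (1 - Real.exp (-1 / (κ * v)))) *
          F (x + y) v :=
  periodic_duhamel_representation_general κ hκ g F hgper hFcont heq
end
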